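/- For an Exp(1)-distributed channel power p (density e^{−p} on [0,∞)) and β > 0, the interference integral I(β) = ∫₀^∞ (pβ/(p+β)) e^{-p} dp satisfies I(β) = β − β² e^{β} E₁(β), where E₁(β) = ∫_β^∞ (e^{−u}/u) du is the exponential integral; in particular I is continuous, strictly increasing in β, and I(β) < 1 for all β > 0. -/
import Mathlib

open MeasureTheory Set
open scoped ENNReal

lemma integ_exp : IntegrableOn (fun p : ℝ => Real.exp (-p)) (Ioi 0) := by
  simpa using exp_neg_integrableOn_Ioi (0:ℝ) (one_pos)

lemma integ_p_exp : IntegrableOn (fun p : ℝ => p * Real.exp (-p)) (Ioi 0) := by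
  have := Real.GammaIntegral_convergent (s := 2) (by norm_num)
  refine (IntegrableOn.congr_fun this ?_ measurableSet_Ioi)
  intro x hx
  simp only [show ((2:ℝ) - 1) = 1 from by norm_num, Real.rpow_one]
  ring

lemma integ_frac {β : ℝ} (hβ : 0 < β) :
    IntegrableOn (fun p : ℝ => Real.exp (-p) / (p + β)) (Ioi 0) := by
  refine Integrable.mono (integ_exp.div_const β) ?_ ?_
  · apply (Measurable.aestronglyMeasurable ?_)
    exact (Real.measurable_exp.comp measurable_neg).div (measurable_id.add_const β)
  · filter_upwards [ae_restrict_mem measurableSet_Ioi] with p hp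
    have hp0 : (0:ℝ) < p := hp
    have hpβ : 0 < p + β := by positivity
    rw [Real.norm_eq_abs, Real.norm_eq_abs, abs_div, abs_of_pos (Real.exp_pos _),
      abs_of_pos hpβ, abs_div, abs_of_pos (Real.exp_pos _), abs_of_pos hβ]
    apply div_le_div_of_nonneg_left (Real.exp_pos _).le hβ
    linarith

lemma integ_main {β : ℝ} (hβ : 0 < β) :
    IntegrableOn (fun p : ℝ => (p * β / (p + β)) * Real.exp (-p)) (Ioi 0) := by
  refine Integrable.mono integ_p_exp ?_ ?_
  · apply (Measurable.aestronglyMeasurable ?_)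
    exact ((measurable_id.mul_const β).div (measurable_id.add_const β)).mul
      (Real.measurable_exp.comp measurable_neg)
  · filter_upwards [ae_restrict_mem measurableSet_Ioi] with p hp
    have hp0 : (0:ℝ) < p := hp
    have hpβ : 0 < p + β := by positivity
    rw [Real.norm_eq_abs, Real.norm_eq_abs, abs_mul, abs_mul,
      abs_of_pos (Real.exp_pos _), abs_of_pos hp0, abs_of_pos (by positivity : 0 < p*β/(p+β))]
    gcongr
    rw [div_le_iff₀ hpβ]
    nlinarith

lemma subst_lemma {β : ℝ} (hβ : 0 < β) :
    (∫ p in Ioi (0:ℝ), Real.exp (-p) / (p + β))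
      = Real.exp β * ∫ u in Ioi β, Real.exp (-u) / u := by
  have key := (measurePreserving_add_right (volume : Measure ℝ) β).setIntegral_preimage_emb
    (measurableEmbedding_addRight β) (fun u => Real.exp (-u) / u) (Ioi β)
  rw [preimage_add_const_Ioi, sub_self] at key
  rw [← key, ← integral_const_mul]
  refine setIntegral_congr_fun measurableSet_Ioi (fun p hp => ?_)
  have hp0 : (0:ℝ) < p := hp
  have hpβ : (0:ℝ) < p + β := by positivity
  rw [neg_add, Real.exp_add, Real.exp_neg β]
  field_simp [Real.exp_ne_zero]

lemma integrand_eq {β : ℝ} (hβ : 0 < β) {p : ℝ} (hp : 0 < p) :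
    (p * β / (p + β)) * Real.exp (-p)
      = β * Real.exp (-p) - β ^ 2 * (Real.exp (-p) / (p + β)) := by
  have hpβ : p + β ≠ 0 := by positivity
  field_simp
  ring

lemma main_formula {β : ℝ} (hβ : 0 < β) :
    (∫ p in Ioi (0:ℝ), (p * β / (p + β)) * Real.exp (-p))
      = β - β ^ 2 * Real.exp β * ∫ u in Ioi β, Real.exp (-u) / u := by
  have h1 : (∫ p in Ioi (0:ℝ), (p * β / (p + β)) * Real.exp (-p))
      = ∫ p in Ioi (0:ℝ), (β * Real.exp (-p) - β ^ 2 * (Real.exp (-p) / (p + β))) :=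
    setIntegral_congr_fun measurableSet_Ioi (fun p hp => integrand_eq hβ hp)
  rw [h1, integral_sub (integ_exp.const_mul β) ((integ_frac hβ).const_mul (β^2)),
    integral_const_mul, integral_const_mul, integral_exp_neg_Ioi_zero, subst_lemma hβ]
  ring

lemma strict_lt_int {f g : ℝ → ℝ} (hf : IntegrableOn f (Ioi 0)) (hg : IntegrableOn g (Ioi 0))
    (h : ∀ p ∈ Ioi (0:ℝ), f p < g p) :
    (∫ p in Ioi (0:ℝ), f p) < ∫ p in Ioi (0:ℝ), g p := by
  have hsub : IntegrableOn (fun p => g p - f p) (Ioi 0) := hg.sub hf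
  have hpos : 0 < ∫ p in Ioi (0:ℝ), (g p - f p) := by
    rw [setIntegral_pos_iff_support_of_nonneg_ae ?_ hsub]
    · have hsubset : Ioi (0:ℝ) ⊆ Function.support (fun p => g p - f p) ∩ Ioi 0 := by
        intro p hp
        exact ⟨by simp [sub_ne_zero.mpr (ne_of_gt (h p hp))], hp⟩
      have hset : Function.support (fun p => g p - f p) ∩ Ioi (0:ℝ) = Ioi 0 :=
        Subset.antisymm inter_subset_right hsubset
      rw [hset]
      simp [Real.volume_Ioi]
    · filter_upwards [ae_restrict_mem measurableSet_Ioi] with p hp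
      exact sub_nonneg.mpr (le_of_lt (h p hp))
  rwa [integral_sub hg hf, sub_pos] at hpos

theorem interference_integral_properties :
    (∀ β : ℝ, 0 < β →
      (∫ p in Ioi (0:ℝ), (p * β / (p + β)) * Real.exp (-p))
        = β - β ^ 2 * Real.exp β * ∫ u in Ioi β, Real.exp (-u) / u) ∧
    ContinuousOn (fun β : ℝ => ∫ p in Ioi (0:ℝ), (p * β / (p + β)) * Real.exp (-p)) (Ioi 0) ∧
    StrictMonoOn (fun β : ℝ => ∫ p in Ioi (0:ℝ), (p * β / (p + β)) * Real.exp (-p)) (Ioi 0) ∧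
    ∀ β : ℝ, 0 < β → (∫ p in Ioi (0:ℝ), (p * β / (p + β)) * Real.exp (-p)) < 1 := by
  refine ⟨fun β hβ => main_formula hβ, ?_, ?_, ?_⟩
  · -- continuity
    intro β₀ hβ₀
    refine (ContinuousAt.continuousWithinAt ?_)
    refine continuousAt_of_dominated (bound := fun p => p * Real.exp (-p)) ?_ ?_ integ_p_exp ?_
    · filter_upwards [eventually_gt_nhds hβ₀] with β hβ
      apply (Measurable.aestronglyMeasurable ?_)
      exact ((measurable_id.mul_const β).div (measurable_id.add_const β)).mul
        (Real.measurable_exp.comp measurable_neg)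
    · filter_upwards [eventually_gt_nhds hβ₀] with β hβ
      filter_upwards [ae_restrict_mem measurableSet_Ioi] with p hp
      have hp0 : (0:ℝ) < p := hp
      have hpβ : 0 < p + β := by positivity
      rw [Real.norm_eq_abs, abs_mul, abs_of_pos (Real.exp_pos _),
        abs_of_pos (by positivity : 0 < p*β/(p+β))]
      gcongr
      rw [div_le_iff₀ hpβ]
      nlinarith
    · filter_upwards [ae_restrict_mem measurableSet_Ioi] with p hp
      have hp0 : (0:ℝ) < p := hp
      have hb0 : (0:ℝ) < β₀ := hβ₀
      have hne : p + β₀ ≠ 0 := by positivity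
      refine ContinuousAt.mul ?_ continuousAt_const
      exact ContinuousAt.div (continuousAt_const.mul continuousAt_id)
        (continuousAt_const.add continuousAt_id) hne
  · -- strict mono
    intro a ha b hb hab
    refine strict_lt_int (integ_main ha) (integ_main hb) ?_
    intro p hp
    have hp0 : (0:ℝ) < p := hp
    have ha0 : (0:ℝ) < a := ha
    have hb0 : (0:ℝ) < b := hb
    have h1 : 0 < p + a := by positivity
    have h2 : 0 < p + b := by positivity
    have hlt : p * a / (p + a) < p * b / (p + b) := by
      rw [div_lt_div_iff₀ h1 h2]
      nlinarith [mul_pos (mul_pos hp0 hp0) (sub_pos.mpr hab)]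
    exact mul_lt_mul_of_pos_right hlt (Real.exp_pos _)
  · -- bound
    intro β hβ
    have key : (∫ p in Ioi (0:ℝ), (p * β / (p + β)) * Real.exp (-p))
        < ∫ p in Ioi (0:ℝ), p * Real.exp (-p) := by
      refine strict_lt_int (integ_main hβ) integ_p_exp ?_
      intro p hp
      have hp0 : (0:ℝ) < p := hp
      have h1 : 0 < p + β := by positivity
      have hlt : p * β / (p + β) < p := by
        rw [div_lt_iff₀ h1]
        nlinarith
      exact mul_lt_mul_of_pos_right hlt (Real.exp_pos _)
    have hG : Real.Gamma 2 = 1 := by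
      rw [show (2:ℝ) = (1:ℕ) + 1 by norm_num, Real.Gamma_nat_eq_factorial]
      simp
    have h2 := Real.Gamma_eq_integral (s := (2:ℝ)) (by norm_num)
    have hgamma : (∫ p in Ioi (0:ℝ), p * Real.exp (-p)) = 1 :=
      calc (∫ p in Ioi (0:ℝ), p * Real.exp (-p))
          = ∫ x in Ioi (0:ℝ), Real.exp (-x) * x ^ ((2:ℝ) - 1) := by
            refine setIntegral_congr_fun measurableSet_Ioi (fun p hp => ?_)
            simp only [show ((2:ℝ) - 1) = 1 from by norm_num, Real.rpow_one]
            ring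
        _ = Real.Gamma 2 := h2.symm
        _ = 1 := hG
    linarith
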